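/- For every transition graph G with n vertices and label universum of size m, there exists an acyclic transition graph G′ over the same universum (a transition graph whose underlying directed graph contains no directed cycle), with at most n·((m+1)·n + 1) + 1 vertices, such that F(G′) = F(G). -/

import Mathlib

structure TransitionGraph (V E U : Type*) where
  src : E → V
  tgt : E → V
  s : V
  t : V
  lab : E → Option U

namespace TransitionGraph

variable {V E U : Type*}

def IsSTPath (G : TransitionGraph V E U) (P : List E) : Prop :=
  List.Chain' (fun e f => G.tgt e = G.src f) P ∧
    ((P = [] ∧ G.s = G.t) ∨
      ∃ h : P ≠ [], G.src (P.head h) = G.s ∧ G.tgt (P.getLast h) = G.t)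

def labelSet [DecidableEq U] (G : TransitionGraph V E U) (P : List E) : Finset U :=
  (P.filterMap G.lab).toFinset

def labelFamily [DecidableEq U] (G : TransitionGraph V E U) : Set (Finset U) :=
  {S | ∃ P : List E, G.IsSTPath P ∧ G.labelSet P = S}

end TransitionGraph

/-- The `ε`-separability property for a family of finite sets. -/
def SepProperty {α : Type*} [DecidableEq α] (ε : ℝ) (F : Set (Finset α)) : Prop :=
  ∀ S₁ ∈ F, ∀ S₂ ∈ F, S₁ ≠ S₂ →
    (6 : ℝ) ≤ ε * (max S₁.card S₂.card : ℕ) →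
    ε * (max S₁.card S₂.card : ℕ) < ((symmDiff S₁ S₂).card : ℝ)


/-- A transition graph is acyclic if its underlying directed graph has no directed cycle. -/
def TransitionGraph.Acyclic {V E U : Type*} (G : TransitionGraph V E U) : Prop :=
  ¬ ∃ (P : List E) (h : P ≠ []),
      List.Chain' (fun e f => G.tgt e = G.src f) P ∧
      G.tgt (P.getLast h) = G.src (P.head h)

/-!
Unroll `G` into `L + 1` layers: each edge of `G` is copied from every layer `i` to layer `i + 1`,
and every copy of `t` leaves by an unlabeled edge to one new terminal vertex. The layered graph is
acyclic, its walks project to walks of `G` with the same labels, and an `s`-`t` walk of `G` lifts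
to it as long as it has at most `L` edges. For `L = (m + 1) n` no label set is lost: along a
longer walk two of its positions carry the same vertex and the same number of labels seen so far;
as the set of labels seen only grows, these sets are equal, so the loop between the two positions
can be cut out without changing the label set.
-/

namespace TransitionGraph

variable {V E U : Type*} (G : TransitionGraph V E U)

def Walk : V → V → List E → Prop
  | a, b, [] => a = b
  | a, b, e :: P => G.src e = a ∧ Walk (G.tgt e) b P

@[simp] lemma walk_nil {a b : V} : G.Walk a b [] ↔ a = b := Iff.rfl

@[simp] lemma walk_cons {a b : V} {e : E} {P : List E} :
    G.Walk a b (e :: P) ↔ G.src e = a ∧ G.Walk (G.tgt e) b P := Iff.rfl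

lemma walk_iff_chain {a b : V} {P : List E} :
    G.Walk a b P ↔ List.IsChain (fun e f => G.tgt e = G.src f) P ∧
      ((P = [] ∧ a = b) ∨ ∃ h : P ≠ [], G.src (P.head h) = a ∧ G.tgt (P.getLast h) = b) := by
  induction P generalizing a with
  | nil => simp
  | cons e P ih =>
    cases P with
    | nil => simp
    | cons f Q =>
      simp only [walk_cons] at ih ⊢
      rw [ih]
      simp only [List.isChain_cons_cons, List.head_cons, List.getLast_cons, ne_eq, reduceCtorEq,
        not_false_eq_true, exists_true_left, false_and, false_or]
      tauto

lemma isSTPath_iff_walk {P : List E} : G.IsSTPath P ↔ G.Walk G.s G.t P :=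
  G.walk_iff_chain.symm

lemma walk_append {a c : V} {P Q : List E} :
    G.Walk a c (P ++ Q) ↔ ∃ b, G.Walk a b P ∧ G.Walk b c Q := by
  induction P generalizing a with
  | nil => simp
  | cons e P ih => simp [ih, and_assoc]

lemma acyclic_iff : G.Acyclic ↔ ∀ v P, G.Walk v v P → P = [] := by
  refine ⟨fun hG v P hP => ?_, fun h ⟨P, hne, hchain, hcycle⟩ => hne ?_⟩
  · by_contra hne
    obtain ⟨hchain, ⟨hnil, -⟩ | ⟨h, hs, ht⟩⟩ := G.walk_iff_chain.1 hP
    · exact hne hnil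
    · exact hG ⟨P, h, hchain, ht.trans hs.symm⟩
  · exact h _ P (G.walk_iff_chain.2 ⟨hchain, .inr ⟨hne, rfl, hcycle⟩⟩)

lemma Walk.add_length_le {h : V → ℕ} (hh : ∀ e, h (G.src e) < h (G.tgt e)) :
    ∀ {a b : V} {P : List E}, G.Walk a b P → h a + P.length ≤ h b
  | _, _, [], rfl => le_rfl
  | _, _, e :: _, ⟨rfl, hP⟩ => by
    have := hh e
    have := Walk.add_length_le hh hP
    simp only [List.length_cons]
    omega

lemma acyclic_of_height (h : V → ℕ) (hh : ∀ e, h (G.src e) < h (G.tgt e)) : G.Acyclic :=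
  G.acyclic_iff.2 fun _ _ hP => List.eq_nil_of_length_eq_zero (by
    have := Walk.add_length_le G hh hP; omega)

section Labels

variable [DecidableEq U]

@[simp] lemma labelSet_nil : G.labelSet [] = ∅ := rfl

@[simp] lemma labelSet_cons (e : E) (P : List E) :
    G.labelSet (e :: P) = (G.lab e).toFinset ∪ G.labelSet P := by
  cases h : G.lab e <;> simp [labelSet, h]

lemma labelSet_append (P Q : List E) :
    G.labelSet (P ++ Q) = G.labelSet P ∪ G.labelSet Q := by
  simp [labelSet]

lemma labelSet_mono {P Q : List E} (h : P.Sublist Q) : G.labelSet P ⊆ G.labelSet Q :=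
  fun _ hx => List.mem_toFinset.2 ((h.filterMap _).subset (List.mem_toFinset.1 hx))

end Labels

section Transport

variable {V' E' : Type*}

def transport (eV : V ≃ V') (eE : E ≃ E') : TransitionGraph V' E' U where
  src e := eV (G.src (eE.symm e))
  tgt e := eV (G.tgt (eE.symm e))
  s := eV G.s
  t := eV G.t
  lab e := G.lab (eE.symm e)

variable (eV : V ≃ V') (eE : E ≃ E')

lemma walk_transport_iff {a b : V'} {P : List E'} :
    (G.transport eV eE).Walk a b P ↔ G.Walk (eV.symm a) (eV.symm b) (P.map eE.symm) := by
  induction P generalizing a with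
  | nil => simp
  | cons e P ih =>
    rw [List.map_cons, walk_cons, walk_cons, ih]
    simp [transport, Equiv.eq_symm_apply]

lemma labelSet_transport [DecidableEq U] (P : List E') :
    (G.transport eV eE).labelSet P = G.labelSet (P.map eE.symm) := by
  simp [labelSet, transport, List.filterMap_map]

lemma labelFamily_transport [DecidableEq U] :
    (G.transport eV eE).labelFamily = G.labelFamily := by
  ext S
  simp only [labelFamily, Set.mem_ofPred_eq, isSTPath_iff_walk, walk_transport_iff,
    labelSet_transport]
  refine ⟨fun ⟨P, hP⟩ => ⟨_, by simpa [transport] using hP⟩, fun ⟨P, hP⟩ => ⟨P.map eE, ?_⟩⟩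
  simpa [transport, List.map_map] using hP

variable {G} in
lemma Acyclic.transport (hG : G.Acyclic) : (G.transport eV eE).Acyclic := by
  rw [acyclic_iff] at hG ⊢
  intro v P hP
  rw [walk_transport_iff] at hP
  exact List.map_eq_nil_iff.1 (hG _ _ hP)

end Transport

section Shortening

variable [Fintype V] [Fintype U] [DecidableEq U]

lemma exists_shorter_walk {a b : V} {P : List E} (hP : G.Walk a b P)
    (hlen : (Fintype.card U + 1) * Fintype.card V < P.length) :
    ∃ Q, G.Walk a b Q ∧ G.labelSet Q = G.labelSet P ∧ Q.length < P.length := by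
  have hsplit (k : ℕ) : ∃ v, G.Walk a v (P.take k) ∧ G.Walk v b (P.drop k) :=
    G.walk_append.1 (by rwa [List.take_append_drop])
  choose v hpre hsuf using hsplit
  obtain ⟨i, hi, j, hj, hij, hvi⟩ := Finset.exists_ne_map_eq_of_card_lt_of_maps_to
    (s := Finset.range (P.length + 1))
    (t := (Finset.univ : Finset V) ×ˢ Finset.range (Fintype.card U + 1))
    (f := fun k => (v k, (G.labelSet (P.take k)).card))
    (by simp only [Finset.card_product, Finset.card_univ, Finset.card_range]; linarith)
    (fun k _ => by simpa [Nat.lt_succ_iff] using Finset.card_le_univ _)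
  wlog hlt : i < j generalizing i j
  · exact this j hj i hi hij.symm hvi.symm (by omega)
  obtain ⟨hv, hcard⟩ := Prod.mk.inj hvi
  have hlabels : G.labelSet (P.take i) = G.labelSet (P.take j) :=
    Finset.eq_of_subset_of_card_le (G.labelSet_mono (List.take_sublist_take_left hlt.le))
      hcard.ge
  refine ⟨P.take i ++ P.drop j, G.walk_append.2 ⟨_, hpre i, hv ▸ hsuf j⟩, ?_, ?_⟩
  · rw [labelSet_append, hlabels, ← labelSet_append, List.take_append_drop]
  · simp only [Finset.mem_range] at hi hj
    simp only [List.length_append, List.length_take, List.length_drop]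
    omega

lemma exists_walk_labelSet_eq_length_le {a b : V} {P : List E} (hP : G.Walk a b P) :
    ∃ Q, G.Walk a b Q ∧ G.labelSet Q = G.labelSet P ∧
      Q.length ≤ (Fintype.card U + 1) * Fintype.card V := by
  induction hn : P.length using Nat.strong_induction_on generalizing P with
  | _ n ih =>
  by_cases hlen : P.length ≤ (Fintype.card U + 1) * Fintype.card V
  · exact ⟨P, hP, rfl, hlen⟩
  obtain ⟨Q, hQ, hQP, hQlen⟩ := G.exists_shorter_walk hP (not_le.1 hlen)
  obtain ⟨R, hR, hRQ, hRlen⟩ := ih _ (hn ▸ hQlen) hQ rfl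
  exact ⟨R, hR, hRQ.trans hQP, hRlen⟩

end Shortening

section Layered

def layered (L : ℕ) :
    TransitionGraph (V × Fin (L + 1) ⊕ Unit) (E × Fin L ⊕ Fin (L + 1)) U where
  src
    | .inl (e, i) => .inl (G.src e, i.castSucc)
    | .inr i => .inl (G.t, i)
  tgt
    | .inl (e, i) => .inl (G.tgt e, i.succ)
    | .inr _ => .inr ()
  s := .inl (G.s, 0)
  t := .inr ()
  lab
    | .inl (e, _) => G.lab e
    | .inr _ => none

lemma layered_acyclic (L : ℕ) : (G.layered L).Acyclic :=
  acyclic_of_height _ (Sum.elim (fun x => x.2) fun _ => L + 1) <| by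
    rintro (⟨e, i⟩ | i) <;> simp [layered, Fin.is_le]

variable [DecidableEq U] {L : ℕ}

lemma exists_layered_walk {a b : V} {Q : List E} (hQ : G.Walk a b Q) {i : ℕ}
    (hi : i + Q.length ≤ L) :
    ∃ P, (G.layered L).Walk (.inl (a, ⟨i, by omega⟩)) (.inl (b, ⟨i + Q.length, by omega⟩)) P ∧
      (G.layered L).labelSet P = G.labelSet Q := by
  induction Q generalizing a i with
  | nil => exact ⟨[], by simpa using hQ, rfl⟩
  | cons e Q ih =>
    obtain ⟨rfl, hQ⟩ := hQ
    rw [List.length_cons] at hi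
    obtain ⟨P, hP, hPQ⟩ := ih hQ (i := i + 1) (by omega)
    refine ⟨.inl (e, ⟨i, by omega⟩) :: P, ⟨rfl, ?_⟩, ?_⟩
    · convert hP using 4
      · rfl
      · rw [List.length_cons]
        omega
    · rw [labelSet_cons, labelSet_cons, hPQ]
      rfl

lemma exists_walk_of_layered_walk {v : V} {i : Fin (L + 1)} {P : List (E × Fin L ⊕ Fin (L + 1))}
    (hP : (G.layered L).Walk (.inl (v, i)) (.inr ()) P) :
    ∃ Q, G.Walk v G.t Q ∧ G.labelSet Q = (G.layered L).labelSet P := by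
  induction P generalizing v i with
  | nil => simp at hP
  | cons x P ih =>
    obtain ⟨hx, hP⟩ := hP
    rcases x with ⟨e, k⟩ | k
    · obtain ⟨rfl, -⟩ : G.src e = v ∧ k.castSucc = i := by simpa [layered] using hx
      obtain ⟨Q, hQ, hQP⟩ := ih hP
      exact ⟨e :: Q, ⟨rfl, hQ⟩, by simp [hQP, layered]⟩
    · obtain ⟨rfl, -⟩ : G.t = v ∧ k = i := by simpa [layered] using hx
      obtain rfl : P = [] := by
        rcases P with _ | ⟨y, P⟩
        · rfl
        · rcases y with ⟨_, _⟩ | _ <;> simp [layered] at hP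
      exact ⟨[], rfl, by simp [layered]⟩

lemma labelFamily_layered [Fintype V] [Fintype U]
    (hL : (Fintype.card U + 1) * Fintype.card V ≤ L) :
    (G.layered L).labelFamily = G.labelFamily := by
  ext S
  simp only [labelFamily, Set.mem_ofPred_eq, isSTPath_iff_walk]
  constructor
  · rintro ⟨P, hP, rfl⟩
    exact G.exists_walk_of_layered_walk hP
  · rintro ⟨P, hP, rfl⟩
    obtain ⟨Q, hQ, hQP, hQlen⟩ := G.exists_walk_labelSet_eq_length_le hP
    obtain ⟨R, hR, hRQ⟩ := G.exists_layered_walk (L := L) hQ (i := 0) (by omega)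
    refine ⟨R ++ [Sum.inr ⟨Q.length, by omega⟩], ?_, ?_⟩
    · have hR' : (G.layered L).Walk (.inl (G.s, 0)) (.inl (G.t, ⟨Q.length, by omega⟩)) R := by
        simpa using hR
      exact (G.layered L).walk_append.2 ⟨_, hR', by simp [layered]⟩
    · rw [labelSet_append, hRQ, hQP]
      exact Finset.union_empty _

end Layered

end TransitionGraph

theorem stmt8 {V E U : Type*} [Fintype V] [Fintype E] [Fintype U] [DecidableEq U]
    (G : TransitionGraph V E U) :
    ∃ (nv ne : ℕ) (G' : TransitionGraph (Fin nv) (Fin ne) U),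
      nv ≤ Fintype.card V * ((Fintype.card U + 1) * Fintype.card V + 1) + 1 ∧
      G'.Acyclic ∧ G'.labelFamily = G.labelFamily := by
  set L := (Fintype.card U + 1) * Fintype.card V
  let eV := Fintype.equivFin (V × Fin (L + 1) ⊕ Unit)
  let eE := Fintype.equivFin (E × Fin L ⊕ Fin (L + 1))
  refine ⟨_, _, (G.layered L).transport eV eE, ?_, (G.layered_acyclic L).transport eV eE, ?_⟩
  · simp [Fintype.card_sum, Fintype.card_prod]
  · rw [TransitionGraph.labelFamily_transport, G.labelFamily_layered le_rfl]
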